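/- Fix an integer K ≥ 2. Let s₀,...,s_{K-1} be positive integers, extended to ℤ/(K(K+1)) by s_i = s_{i mod K}. Suppose λ_i, i ∈ ℤ/(K(K+1)), are nonnegative integers with s_i = ∑_{j=i-K}^{i} λ_j for all i, and s₀ = min{s_k}. Then λ_{(i-1)K+i} ≥ s_i - s₀ for all 1 ≤ i ≤ K-1. -/

import Mathlib

/-!
Write `T c = ∑_{j<K} λ_{c-j}` for the window sum with its last term dropped. Splitting the
full windows at `c + 1` and `c + 1 + K` off at either end gives
`s_{c+1} = λ_{c+1} + T c` and `s_{c+1+K} = T (c + K + 1) + λ_{c+1}`. At `c = m(K+1)` both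
indices are `≡ m + 1 (mod K)`, so periodicity forces `T ((m+1)(K+1)) = T (m(K+1))`, hence
`T (m(K+1)) = T 0 ≤ s₀`, and then `λ_{m(K+1)+1} = s_{m+1} - T (m(K+1)) ≥ s_{m+1} - s₀`.
-/

open Finset

section WindowSum

variable {G M : Type*} [AddCommGroupWithOne G]

def windowSum [AddCommMonoid M] (lam : G → M) (n : ℕ) (i : G) : M :=
  ∑ j ∈ range n, lam (i - j)

section AddCommMonoid

variable [AddCommMonoid M] (lam : G → M) (n : ℕ) (i : G)

theorem windowSum_succ : windowSum lam (n + 1) i = windowSum lam n i + lam (i - n) :=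
  sum_range_succ _ _

theorem windowSum_succ_add_one :
    windowSum lam (n + 1) (i + 1) = lam (i + 1) + windowSum lam n i := by
  rw [windowSum, sum_range_succ', Nat.cast_zero, sub_zero, add_comm, windowSum]
  congr 1
  refine sum_congr rfl fun j _ => ?_
  rw [Nat.cast_succ, add_sub_add_right_eq_sub]

end AddCommMonoid

variable [AddCancelCommMonoid M] (lam : G → M)

theorem windowSum_add_succ_eq_of_eq {n : ℕ} {i : G}
    (h : windowSum lam (n + 1) (i + 1) = windowSum lam (n + 1) (i + 1 + n)) :
    windowSum lam n (i + 1 + n) = windowSum lam n i := by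
  rwa [windowSum_succ_add_one, windowSum_succ, add_sub_cancel_right, add_comm,
    add_right_cancel_iff, eq_comm] at h

theorem windowSum_natCast_mul_succ_eq_windowSum_zero {k : ℕ}
    (h : ∀ m, m + 1 < k → windowSum lam (k + 1) ((m * (k + 1) + 1 : ℕ) : G) =
      windowSum lam (k + 1) ((m + 1) * (k + 1) : ℕ)) :
    ∀ m < k, windowSum lam k ((m * (k + 1) : ℕ) : G) = windowSum lam k 0 := by
  intro m hm
  induction m with
  | zero => simp
  | succ m ih =>
    have hcast : (((m + 1) * (k + 1) : ℕ) : G) = ((m * (k + 1) : ℕ) : G) + 1 + k := by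
      rw [show (m + 1) * (k + 1) = m * (k + 1) + 1 + k by ring, Nat.cast_add, Nat.cast_succ]
    have hstep := windowSum_add_succ_eq_of_eq lam (i := ((m * (k + 1) : ℕ) : G)) (by
      rw [← hcast, ← Nat.cast_succ]
      exact h m hm)
    rw [hcast, hstep, ih (by omega)]

end WindowSum

theorem ZMod.apply_natCast_eq_of_modEq {α : Type*} {N K : ℕ} {s : ZMod N → α}
    (hper : ∀ i j : ZMod N, i.val % K = j.val % K → s i = s j) (hKN : K ∣ N) {a b : ℕ}
    (hab : a ≡ b [MOD K]) : s a = s b :=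
  hper _ _ <| by rw [ZMod.val_natCast, ZMod.val_natCast, Nat.mod_mod_of_dvd _ hKN,
    Nat.mod_mod_of_dvd _ hKN, hab]

theorem Nat.mul_succ_modEq (m K : ℕ) : m * (K + 1) ≡ m [MOD K] := by
  rw [Nat.ModEq, show m * (K + 1) = K * m + m by ring, Nat.mul_add_mod]

theorem stmt_7_general (K : ℕ)
    (s : ZMod (K * (K + 1)) → ℕ)
    (hper : ∀ i j : ZMod (K * (K + 1)), i.val % K = j.val % K → s i = s j)
    (lam : ZMod (K * (K + 1)) → ℕ)
    (heq : ∀ i : ZMod (K * (K + 1)),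
      s i = ∑ j ∈ Finset.range (K + 1), lam (i - (j : ZMod (K * (K + 1))))) :
    ∀ i : ℕ, 1 ≤ i → i ≤ K - 1 →
      s (i : ZMod (K * (K + 1))) - s 0 ≤
        lam (((i - 1) * K + i : ℕ) : ZMod (K * (K + 1))) := by
  intro i hi hiK
  obtain ⟨m, rfl⟩ : ∃ m, i = m + 1 := ⟨i - 1, by omega⟩
  have hs : ∀ i, s i = windowSum lam (K + 1) i := heq
  have hper' {a b : ℕ} : a ≡ b [MOD K] → s a = s b :=
    ZMod.apply_natCast_eq_of_modEq hper (dvd_mul_right K (K + 1))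
  have htail : windowSum lam K ((m * (K + 1) : ℕ) : ZMod (K * (K + 1))) = windowSum lam K 0 :=
    windowSum_natCast_mul_succ_eq_windowSum_zero lam (fun m _ => by
      rw [← hs, ← hs, hper' (((Nat.mul_succ_modEq m K).add_right 1).trans
        (Nat.mul_succ_modEq (m + 1) K).symm)]) m (by omega)
  have hs₀ : windowSum lam K 0 ≤ s 0 := by
    rw [hs, windowSum_succ]
    exact Nat.le_add_right _ _
  have hsm : s (m + 1 : ℕ) = lam (m * (K + 1) + 1 : ℕ) + windowSum lam K 0 := by
    rw [← hper' ((Nat.mul_succ_modEq m K).add_right 1), hs, Nat.cast_succ, windowSum_succ_add_one,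
      htail]
  rw [show (m + 1 - 1) * K + (m + 1) = m * (K + 1) + 1 by simp; ring]
  omega

/-- key chain of inequalities `λ_{(i-1)K+i} ≥ sᵢ - s₀` in the
necessity proof for the K-user BIA condition. -/
theorem stmt_7 (K : ℕ) (hK : 2 ≤ K)
    (s : ZMod (K * (K + 1)) → ℕ)
    (hpos : ∀ i, 0 < s i)
    (hper : ∀ i j : ZMod (K * (K + 1)), i.val % K = j.val % K → s i = s j)
    (lam : ZMod (K * (K + 1)) → ℕ)
    (heq : ∀ i : ZMod (K * (K + 1)),
      s i = ∑ j ∈ Finset.range (K + 1), lam (i - (j : ZMod (K * (K + 1)))))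
    (hmin : ∀ k : ℕ, k < K → s 0 ≤ s (k : ZMod (K * (K + 1)))) :
    ∀ i : ℕ, 1 ≤ i → i ≤ K - 1 →
      s (i : ZMod (K * (K + 1))) - s 0 ≤
        lam (((i - 1) * K + i : ℕ) : ZMod (K * (K + 1))) :=
  stmt_7_general K s hper lam heq
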